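/- arXiv:2203.16129 — 2 statements merged into one kernel-verified Lean document; each statement's English description precedes it below -/
import Mathlib

section
/- Let (P, L) be an antipodal plane of order s ≥ 3 that admits an embedding into PG(2,q) for some prime power q. Then there exist three points A₁, A₂, A₃ ∈ P such that each pair of them is incident with a common line of L, and such that for each i the antipodal point Aᵢ^⊥ (the unique point of P joined to Aᵢ by no line of L) is not incident with any of the three lines A₁A₂, A₁A₃, A₂A₃ of L. -/
/-- An antipodal plane of order `s`: a partial linear space with
`s^2 + s + 2` points and lines, every line incident with exactly `s + 1` points and
every point incident with exactly `s + 1` lines. -/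
structure IsAntipodalPlane {P L : Type*} (s : ℕ) (R : P → L → Prop) : Prop where
  line_two_le : ∀ l : L, 2 ≤ {x | R x l}.ncard
  partial_linear : ∀ x y : P, x ≠ y → ∀ l m : L, R x l → R y l → R x m → R y m → l = m
  card_points : Nat.card P = s ^ 2 + s + 2
  card_lines : Nat.card L = s ^ 2 + s + 2
  line_card : ∀ l : L, {x | R x l}.ncard = s + 1
  point_card : ∀ x : P, {l | R x l}.ncard = s + 1

/-- Points of `PG(2,q)`: the 1-dimensional subspaces of `F_q ^ 3`. -/
def PGPoint (F : Type*) [Field F] : Type _ :=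
  {W : Submodule F (Fin 3 → F) // Module.finrank F W = 1}

/-- Lines of `PG(2,q)`: the 2-dimensional subspaces of `F_q ^ 3`. -/
def PGLine (F : Type*) [Field F] : Type _ :=
  {W : Submodule F (Fin 3 → F) // Module.finrank F W = 2}

/-- Incidence in `PG(2,q)`: containment of subspaces. -/
def PGIncidence (F : Type*) [Field F] : PGPoint F → PGLine F → Prop :=
  fun x l => x.1 ≤ l.1

/-- An embedding of the incidence structure `R` into the incidence structure `R'`:
injective maps on points and lines preserving incidence and non-incidence. -/
def HasEmbedding {P L P' L' : Type*} (R : P → L → Prop) (R' : P' → L' → Prop) : Prop :=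
  ∃ (φ : P → P') (ψ : L → L'), Function.Injective φ ∧ Function.Injective ψ ∧
    ∀ (x : P) (l : L), R x l ↔ R' (φ x) (ψ l)

/-!
Counting the points on the `s + 1` lines through a point `A` shows that exactly one point
`A^⊥` (the antipode) is not on a common line with `A`. Fix `A₁` and a line `l₂₃` through neither
`A₁` nor `A₁^⊥` (only `2s + 2` of the `s² + s + 2` lines pass through one of them); every point of
`l₂₃` is then joined to `A₁`. For `X` on `l₂₃` the line through `A₁` and `X^⊥` meets `l₂₃` in at
most one point, so at most `s + 1` ordered pairs `(X, Y)` of points of `l₂₃` have `X^⊥` on `A₁Y`.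
Excluding these, their transposes and the diagonal removes at most `3(s + 1) < (s + 1)²` pairs,
and any remaining pair `(A₂, A₃)` completes the triangle.
-/

def OnCommonLine {P L : Type*} (R : P → L → Prop) (x y : P) : Prop :=
  ∃ l, R x l ∧ R y l

theorem OnCommonLine.symm {P L : Type*} {R : P → L → Prop} {x y : P} :
    OnCommonLine R x y → OnCommonLine R y x := fun ⟨l, hx, hy⟩ => ⟨l, hy, hx⟩

theorem Set.exists_ne_not_rel_of_three_lt_ncard {α : Type*} {S : Set α} {r : α → α → Prop}
    (hS : 3 < S.ncard) (hr : ∀ x ∈ S, ∀ y ∈ S, ∀ y' ∈ S, r x y → r x y' → y = y') :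
    ∃ x ∈ S, ∃ y ∈ S, x ≠ y ∧ ¬r x y ∧ ¬r y x := by
  classical
  obtain ⟨T, rfl⟩ := (Set.finite_of_ncard_pos (by omega : 0 < S.ncard)).exists_finset_coe
  rw [Set.ncard_coe_finset] at hS
  by_contra! hall
  have hcover : T ×ˢ T ⊆ T.diag ∪ ((T ×ˢ T).filter (fun p => r p.1 p.2) ∪
      (T ×ˢ T).filter (fun p => r p.2 p.1)) := by
    rintro ⟨x, y⟩ hxy
    obtain ⟨hx, hy⟩ := Finset.mem_product.mp hxy
    by_cases hne : x = y
    · exact Finset.mem_union_left _ (Finset.mem_diag.mpr ⟨hx, hne⟩)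
    · by_cases hr_xy : r x y
      · simp [hx, hy, hr_xy]
      · simp [hx, hy, hall x hx y hy hne hr_xy]
  have hfst : ((T ×ˢ T).filter (fun p => r p.1 p.2)).card ≤ T.card :=
    Finset.card_le_card_of_injOn Prod.fst
      (fun p hp => (Finset.mem_product.mp (Finset.mem_filter.mp hp).1).1)
      (fun p hp q hq e => by
        simp only [Finset.coe_filter, Finset.mem_product, Set.mem_ofPred_eq] at hp hq
        exact Prod.ext e (hr _ hq.1.1 _ hp.1.2 _ hq.1.2 (e ▸ hp.2) hq.2))
  have hsnd : ((T ×ˢ T).filter (fun p => r p.2 p.1)).card ≤ T.card :=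
    Finset.card_le_card_of_injOn Prod.snd
      (fun p hp => (Finset.mem_product.mp (Finset.mem_filter.mp hp).1).2)
      (fun p hp q hq e => by
        simp only [Finset.coe_filter, Finset.mem_product, Set.mem_ofPred_eq] at hp hq
        exact Prod.ext (hr _ hq.1.2 _ hp.1.1 _ hq.1.1 (e ▸ hp.2) hq.2) e)
  have : T.card * T.card ≤ 3 * T.card := calc
    T.card * T.card = (T ×ˢ T).card := (Finset.card_product T T).symm
    _ ≤ _ := Finset.card_le_card hcover
    _ ≤ T.diag.card + (((T ×ˢ T).filter (fun p => r p.1 p.2)).card +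
        ((T ×ˢ T).filter (fun p => r p.2 p.1)).card) :=
      (Finset.card_union_le _ _).trans (Nat.add_le_add_left (Finset.card_union_le _ _) _)
    _ ≤ 3 * T.card := by rw [Finset.diag_card]; omega
  nlinarith

namespace IsAntipodalPlane

variable {P L : Type*} {s : ℕ} {R : P → L → Prop}

theorem finite_point (h : IsAntipodalPlane s R) : Finite P :=
  (Nat.card_pos_iff.mp (by rw [h.card_points]; positivity)).2

theorem onCommonLine_self (h : IsAntipodalPlane s R) (x : P) : OnCommonLine R x x := by
  obtain ⟨l, hl⟩ : {l | R x l}.Nonempty :=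
    Set.nonempty_of_ncard_ne_zero (by rw [h.point_card]; omega)
  exact ⟨l, hl, hl⟩

theorem ncard_setOf_onCommonLine (h : IsAntipodalPlane s R) (A : P) :
    {x | OnCommonLine R A x}.ncard = s ^ 2 + s + 1 := by
  have := h.finite_point
  have hdecomp :
      {x | OnCommonLine R A x} = insert A (⋃ l ∈ {l | R A l}, {x | R x l} \ {A}) := by
    ext x
    by_cases hx : x = A
    · simpa [hx] using h.onCommonLine_self A
    · simp [OnCommonLine, hx]
  have hdisj : Set.PairwiseDisjoint {l | R A l} (fun l => {x | R x l} \ {A}) := by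
    intro l hl m hm hlm
    refine Set.disjoint_left.mpr fun x hxl hxm => hlm ?_
    exact h.partial_linear A x (Ne.symm hxl.2) l m hl hxl.1 hm hxm.1
  have hlines : {l | R A l}.Finite := Set.finite_of_ncard_pos (by rw [h.point_card]; omega)
  have hsum : (⋃ l ∈ {l | R A l}, {x | R x l} \ {A}).ncard = s * (s + 1) := calc
    _ = ∑ᶠ l ∈ {l | R A l}, s * 1 := by
      rw [hlines.ncard_biUnion (fun _ _ => Set.toFinite _) hdisj]
      exact finsum_mem_congr rfl fun l hl => by
        rw [Set.ncard_sdiff_singleton_of_mem (s := {x | R x l}) hl, h.line_card]; simp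
    _ = s * (s + 1) := by rw [← mul_finsum_mem (fun _ => 1), finsum_one, h.point_card]
  rw [hdecomp, Set.ncard_insert_of_notMem (by simp), hsum]
  ring

theorem existsUnique_not_onCommonLine (h : IsAntipodalPlane s R) (A : P) :
    ∃! B, ¬OnCommonLine R A B := by
  have := h.finite_point
  have hcompl : {x | OnCommonLine R A x}ᶜ.ncard = 1 := by
    have := Set.ncard_add_ncard_compl {x | OnCommonLine R A x}
    rw [h.ncard_setOf_onCommonLine, h.card_points] at this
    omega
  obtain ⟨B, hB⟩ := Set.ncard_eq_one.mp hcompl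
  exact ⟨B, (Set.ext_iff.mp hB B).mpr rfl, fun C hC => (Set.ext_iff.mp hB C).mp hC⟩

noncomputable def antipode (h : IsAntipodalPlane s R) (A : P) : P :=
  (h.existsUnique_not_onCommonLine A).exists.choose

theorem not_onCommonLine_antipode (h : IsAntipodalPlane s R) (A : P) :
    ¬OnCommonLine R A (h.antipode A) :=
  (h.existsUnique_not_onCommonLine A).exists.choose_spec

theorem eq_antipode_of_not_onCommonLine (h : IsAntipodalPlane s R) {A B : P}
    (hAB : ¬OnCommonLine R A B) : B = h.antipode A :=
  (h.existsUnique_not_onCommonLine A).unique hAB (h.not_onCommonLine_antipode A)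

theorem onCommonLine_of_ne_antipode (h : IsAntipodalPlane s R) {A B : P}
    (hB : B ≠ h.antipode A) : OnCommonLine R A B :=
  not_not.mp (mt h.eq_antipode_of_not_onCommonLine hB)

theorem not_incident_antipode (h : IsAntipodalPlane s R) {A : P} {l : L} (hA : R A l) :
    ¬R (h.antipode A) l :=
  fun hl => h.not_onCommonLine_antipode A ⟨l, hA, hl⟩

theorem eq_antipode_of_antipode_eq (h : IsAntipodalPlane s R) {A X : P}
    (hXA : h.antipode X = A) : X = h.antipode A :=
  h.eq_antipode_of_not_onCommonLine fun hc => h.not_onCommonLine_antipode X (hXA ▸ hc.symm)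

theorem exists_not_incident_not_incident (h : IsAntipodalPlane s R) (hs : 2 ≤ s) (A B : P) :
    ∃ l, ¬R A l ∧ ¬R B l := by
  by_contra! hcover
  have huniv : (Set.univ : Set L) = {l | R A l} ∪ {l | R B l} := by
    ext l
    by_cases hl : R A l <;> simp [hl, hcover l]
  have := Set.ncard_union_le {l | R A l} {l | R B l}
  rw [← huniv, Set.ncard_univ, h.card_lines, h.point_card, h.point_card] at this
  nlinarith

theorem eq_of_collinear_of_not_incident (h : IsAntipodalPlane s R) {A Z Y Y' : P} {l : L}
    (hAl : ¬R A l) (hZA : Z ≠ A) (hY : R Y l) (hY' : R Y' l)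
    (hm : ∃ m, R A m ∧ R Z m ∧ R Y m) (hm' : ∃ m, R A m ∧ R Z m ∧ R Y' m) : Y = Y' := by
  obtain ⟨m, hAm, hZm, hYm⟩ := hm
  obtain ⟨m', hAm', hZm', hYm'⟩ := hm'
  obtain rfl : m = m' := h.partial_linear A Z hZA.symm m m' hAm hZm hAm' hZm'
  by_contra hYY'
  exact hAl (h.partial_linear Y Y' hYY' l m hY hY' hYm hYm' ▸ hAm)

end IsAntipodalPlane

theorem exists_triangle_of_embedded_antipodal_general {P L : Type} (s : ℕ) (hs : 3 ≤ s)
    (R : P → L → Prop) (h : IsAntipodalPlane s R) :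
    ∃ (A₁ A₂ A₃ : P) (l₁₂ l₁₃ l₂₃ : L),
      A₁ ≠ A₂ ∧ A₁ ≠ A₃ ∧ A₂ ≠ A₃ ∧
      R A₁ l₁₂ ∧ R A₂ l₁₂ ∧ R A₁ l₁₃ ∧ R A₃ l₁₃ ∧ R A₂ l₂₃ ∧ R A₃ l₂₃ ∧
      ∀ B : P,
        ((∀ l : L, ¬(R A₁ l ∧ R B l)) ∨ (∀ l : L, ¬(R A₂ l ∧ R B l)) ∨
          (∀ l : L, ¬(R A₃ l ∧ R B l))) →
        ¬ R B l₁₂ ∧ ¬ R B l₁₃ ∧ ¬ R B l₂₃ := by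
  obtain ⟨A₁⟩ : Nonempty P := (Nat.card_pos_iff.mp (by rw [h.card_points]; positivity)).1
  obtain ⟨l₂₃, h₁l₂₃, hB₁l₂₃⟩ := h.exists_not_incident_not_incident (by omega) A₁ (h.antipode A₁)
  obtain ⟨A₂, h₂l₂₃, A₃, h₃l₂₃, hA₂A₃, hgood₂₃, hgood₃₂⟩ :=
    Set.exists_ne_not_rel_of_three_lt_ncard (S := {x | R x l₂₃})
      (r := fun X Y => ∃ m, R A₁ m ∧ R (h.antipode X) m ∧ R Y m) (by rw [h.line_card]; omega)
      fun X hX Y hY Y' hY' => h.eq_of_collinear_of_not_incident h₁l₂₃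
        (fun hXA => hB₁l₂₃ (h.eq_antipode_of_antipode_eq hXA ▸ hX)) hY hY'
  obtain ⟨l₁₂, h₁l₁₂, h₂l₁₂⟩ : OnCommonLine R A₁ A₂ :=
    h.onCommonLine_of_ne_antipode fun he => hB₁l₂₃ (he ▸ h₂l₂₃)
  obtain ⟨l₁₃, h₁l₁₃, h₃l₁₃⟩ : OnCommonLine R A₁ A₃ :=
    h.onCommonLine_of_ne_antipode fun he => hB₁l₂₃ (he ▸ h₃l₂₃)
  refine ⟨A₁, A₂, A₃, l₁₂, l₁₃, l₂₃, fun he => h₁l₂₃ (he ▸ h₂l₂₃),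
    fun he => h₁l₂₃ (he ▸ h₃l₂₃), hA₂A₃,
    h₁l₁₂, h₂l₁₂, h₁l₁₃, h₃l₁₃, h₂l₂₃, h₃l₂₃, ?_⟩
  rintro B (hB | hB | hB) <;>
    obtain rfl := h.eq_antipode_of_not_onCommonLine fun ⟨l, hl⟩ => hB l hl
  · exact ⟨h.not_incident_antipode h₁l₁₂, h.not_incident_antipode h₁l₁₃, hB₁l₂₃⟩
  · exact ⟨h.not_incident_antipode h₂l₁₂, fun hl => hgood₂₃ ⟨l₁₃, h₁l₁₃, hl, h₃l₁₃⟩,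
      h.not_incident_antipode h₂l₂₃⟩
  · exact ⟨fun hl => hgood₃₂ ⟨l₁₂, h₁l₁₂, hl, h₂l₁₂⟩, h.not_incident_antipode h₃l₁₃,
      h.not_incident_antipode h₃l₂₃⟩

/-- In an antipodal plane of order `s ≥ 3` embedded in `PG(2,q)`, there is a triangle
whose sides are lines of the plane and such that the antipodal points of its vertices
are not on its sides. -/
theorem exists_triangle_of_embedded_antipodal {P L : Type} (s : ℕ) (hs : 3 ≤ s)
    (R : P → L → Prop) (h : IsAntipodalPlane s R)
    (F : Type) [Field F] [Fintype F]
    (hemb : HasEmbedding R (PGIncidence F)) :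
    ∃ (A₁ A₂ A₃ : P) (l₁₂ l₁₃ l₂₃ : L),
      A₁ ≠ A₂ ∧ A₁ ≠ A₃ ∧ A₂ ≠ A₃ ∧
      R A₁ l₁₂ ∧ R A₂ l₁₂ ∧ R A₁ l₁₃ ∧ R A₃ l₁₃ ∧ R A₂ l₂₃ ∧ R A₃ l₂₃ ∧
      ∀ B : P,
        ((∀ l : L, ¬(R A₁ l ∧ R B l)) ∨ (∀ l : L, ¬(R A₂ l ∧ R B l)) ∨
          (∀ l : L, ¬(R A₃ l ∧ R B l))) →
        ¬ R B l₁₂ ∧ ¬ R B l₁₃ ∧ ¬ R B l₂₃ :=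
  exists_triangle_of_embedded_antipodal_general s hs R h
end

section
/- Let p ≥ 3 be a prime, Π a finite projective plane of order p², c a code word of C(Π)^⊥ of weight w(c) = 2p² − 2p + 2 + ε with 1 ≤ ε ≤ p − 2, let S = supp(c), and for A ∈ S let x_A be the number of 2-secants to S through A. Then for every λ ∈ {1, ..., p−1}: (i) for every A ∈ K_λ, x_A ≤ |K_{p−λ}|; (ii) if |K_{p−λ}| = 2p + 1 − ε, then x_P = 2p + 1 − ε for all P ∈ K_λ; (iii) if x_P = 2p + 1 − ε for some P ∈ K_λ, then |K_{p−λ}| = 2p + 1 − ε, every line through P meeting S in more than one point is a 2-secant or 3-secant to S, and K_{p−λ} is exactly the set of points of S \ {P} lying on 2-secants to S through P; (iv) if |K_{p−λ}| = 2p + 2 − ε, then every P ∈ K_λ lies on exactly 2p + 2 − ε 2-secants, exactly p² − 2p − 2 + ε 3-secants, and exactly one 4-secant to S. -/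
/-- A projective plane of order `n`, given by an abstract incidence relation `R`. -/
structure IsProjectivePlaneOrder {P L : Type*} (n : ℕ) (R : P → L → Prop) : Prop where
  existsUnique_line : ∀ x y : P, x ≠ y → ∃! l : L, R x l ∧ R y l
  existsUnique_point : ∀ l m : L, l ≠ m → ∃! x : P, R x l ∧ R x m
  quadrangle : ∃ a b c d : P, a ≠ b ∧ a ≠ c ∧ a ≠ d ∧ b ≠ c ∧ b ≠ d ∧ c ≠ d ∧
    ∀ l : L, ¬(R a l ∧ R b l ∧ R c l) ∧ ¬(R a l ∧ R b l ∧ R d l) ∧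
      ¬(R a l ∧ R c l ∧ R d l) ∧ ¬(R b l ∧ R c l ∧ R d l)
  line_card : ∀ l : L, {x | R x l}.ncard = n + 1
  point_card : ∀ x : P, {l | R x l}.ncard = n + 1

/-- A code word of the dual code `C(Π)^⊥`: a function from points to `F_p` summing
to zero on every line. -/
def IsDualCodeWord {P L : Type*} (p : ℕ) (R : P → L → Prop) (c : P → ZMod p) : Prop :=
  ∀ l : L, ∑ᶠ x ∈ {y : P | R y l}, c x = 0

/-- The number of `k`-secants to the point set `S` through the point `A`. -/
noncomputable def nSecants {P L : Type*} (R : P → L → Prop) (S : Set P) (k : ℕ) (A : P) : ℕ :=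
  {l : L | R A l ∧ ({x | R x l} ∩ S).ncard = k}.ncard

/-!
Fix `P` with `c P = λ`, write `q = p²` and `S = supp c`. Every line through `P` meets `S` at
least twice, since the values of `c` on a line sum to `0`; and counting the points of `S` along
the `q + 1` lines through `P` gives `∑ |ℓ ∩ S| = |S| + q`. So if `x_P` of these lines are
2-secants and `E = ∑ (|ℓ ∩ S| - 3)` is the excess of the others over `3`, then
`x_P + ε = 2p + 1 + E`.

The second point of a 2-secant through `P` has value `-λ`, so these points inject into
`K_{p-λ}` and `x_P ≤ |K_{p-λ}|`. Conversely, a point of value `-λ` (which is not `P`, as `p` is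
odd) cannot lie on a 3-secant through `P`, for the third value would be `0`. Hence when `E = 0`
the set `K_{p-λ}` is exactly the set of second points of the 2-secants through `P`. The four
statements follow by comparing `E` with `0` and `1`.
-/

open Function Finset

theorem ZMod.neg_ne_self_of_odd {n : ℕ} (hn : Odd n) {a : ZMod n} (ha : a ≠ 0) : -a ≠ a := by
  rw [Ne, ZMod.neg_eq_self_iff, not_or]
  obtain ⟨m, rfl⟩ := hn
  exact ⟨ha, by omega⟩

theorem Set.eq_pair_of_ncard_eq_two {α : Type*} {s : Set α} {a b : α} (h : s.ncard = 2)
    (ha : a ∈ s) (hb : b ∈ s) (hab : a ≠ b) : s = {a, b} :=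
  (Set.eq_of_subset_of_ncard_le (Set.pair_subset ha hb) (by rw [h, Set.ncard_pair hab])
    (Set.finite_of_ncard_ne_zero (by omega))).symm

theorem Finset.sum_add_card_filter_eq_two {ι : Type*} {s : Finset ι} {k : ι → ℕ}
    (hk : ∀ i ∈ s, 2 ≤ k i) :
    ∑ i ∈ s, k i + #{i ∈ s | k i = 2} = 3 * #s + ∑ i ∈ s, (k i - 3) := by
  rw [card_filter, ← sum_add_distrib, mul_comm, ← smul_eq_mul, ← sum_const,
    ← sum_add_distrib]
  exact sum_congr rfl fun i hi => by have := hk i hi; split_ifs <;> omega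

theorem Finset.card_filter_of_sum_tsub_three_eq_one {ι : Type*} {s : Finset ι} {k : ι → ℕ}
    (hk : ∀ i ∈ s, 2 ≤ k i) (h : ∑ i ∈ s, (k i - 3) = 1) :
    #{i ∈ s | k i = 2} + #{i ∈ s | k i = 3} + 1 = #s ∧ #{i ∈ s | k i = 4} = 1 := by
  have hk4 : ∀ i ∈ s, k i ≤ 4 := fun i hi => by
    have := h ▸ single_le_sum (f := fun i => k i - 3) (fun _ _ => Nat.zero_le _) hi
    omega
  have h4 : #{i ∈ s | k i = 4} = 1 := by
    rw [card_filter, ← h]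
    exact sum_congr rfl fun i hi => by have := hk i hi; have := hk4 i hi; split_ifs <;> omega
  refine ⟨?_, h4⟩
  rw [← h4, card_filter, card_filter, card_filter, ← sum_add_distrib, ← sum_add_distrib,
    card_eq_sum_ones]
  exact sum_congr rfl fun i hi => by have := hk i hi; have := hk4 i hi; split_ifs <;> omega

section Incidence

variable {P L : Type*} {R : P → L → Prop} {n : ℕ}

noncomputable def linesThrough [Finite L] (R : P → L → Prop) (A : P) : Finset L :=
  (Set.toFinite {l | R A l}).toFinset

@[simp]
theorem mem_linesThrough [Finite L] {A : P} {l : L} : l ∈ linesThrough R A ↔ R A l :=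
  Set.Finite.mem_toFinset _

theorem nSecants_eq_card_filter [Finite L] (S : Set P) (k : ℕ) (A : P) :
    nSecants R S k A = #{l ∈ linesThrough R A | ({x | R x l} ∩ S).ncard = k} := by
  rw [nSecants, ← Set.ncard_coe_finset]
  congr 1
  ext l
  simp

def twoSecantPartners (R : P → L → Prop) (S : Set P) (A : P) : Set P :=
  {x | x ∈ S ∧ x ≠ A ∧ ∃ l : L, R A l ∧ R x l ∧ ({y | R y l} ∩ S).ncard = 2}

/-- Truncated subtraction: lines meeting `S` in at most three points contribute `0`. -/
noncomputable def secantExcess [Finite L] (R : P → L → Prop) (S : Set P) (A : P) : ℕ :=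
  ∑ l ∈ linesThrough R A, (({x | R x l} ∩ S).ncard - 3)

theorem secantExcess_eq_zero_iff [Finite L] {S : Set P} {A : P} :
    secantExcess R S A = 0 ↔ ∀ l, R A l → ({x | R x l} ∩ S).ncard ≤ 3 := by
  simp [secantExcess, sum_eq_zero_iff, Nat.sub_eq_zero_iff_le]

namespace IsProjectivePlaneOrder

theorem card_linesThrough [Finite L] (h : IsProjectivePlaneOrder n R) (A : P) :
    #(linesThrough R A) = n + 1 := by
  rw [linesThrough, ← Set.ncard_eq_toFinset_card]
  exact h.point_card A

theorem card_filter_linesThrough [Finite L] [DecidableRel R] (h : IsProjectivePlaneOrder n R)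
    {A x : P} (hxA : x ≠ A) : #{l ∈ linesThrough R A | R x l} = 1 := by
  obtain ⟨l, ⟨hxl, hAl⟩, hl⟩ := h.existsUnique_line x A hxA
  refine card_eq_one.2 ⟨l, eq_singleton_iff_unique_mem.2 ⟨by simp [hxl, hAl], ?_⟩⟩
  simp only [mem_filter, mem_linesThrough]
  exact fun m ⟨hAm, hxm⟩ => hl m ⟨hxm, hAm⟩

theorem sum_ncard_inter_linesThrough [Finite P] [Finite L] (h : IsProjectivePlaneOrder n R)
    {S : Set P} {A : P} (hA : A ∈ S) :
    ∑ l ∈ linesThrough R A, ({x | R x l} ∩ S).ncard = S.ncard + n := by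
  classical
  set s := (Set.toFinite S).toFinset
  have hAs : A ∈ s := by simpa [s] using hA
  have hline (l : L) : ({x | R x l} ∩ S).ncard = #(s.bipartiteBelow R l) := by
    rw [← Set.ncard_coe_finset]
    congr 1
    ext x
    simp [s, bipartiteBelow, and_comm]
  have hpoint (x : P) (hx : x ∈ s.erase A) : #((linesThrough R A).bipartiteAbove R x) = 1 :=
    h.card_filter_linesThrough (ne_of_mem_erase hx)
  have hA' : #((linesThrough R A).bipartiteAbove R A) = n + 1 := by
    rw [bipartiteAbove, filter_true_of_mem fun l hl => mem_linesThrough.1 hl, h.card_linesThrough]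
  have hS : S.ncard = #s := Set.ncard_eq_toFinset_card S
  rw [sum_congr rfl fun l _ => hline l, ← sum_card_bipartiteAbove_eq_sum_card_bipartiteBelow,
    ← add_sum_erase s _ hAs, hA', sum_congr rfl hpoint, sum_const, smul_eq_mul, mul_one,
    card_erase_of_mem hAs, hS]
  have := card_pos.2 ⟨A, hAs⟩
  omega

theorem ncard_twoSecantPartners (h : IsProjectivePlaneOrder n R) {S : Set P} {A : P}
    (hA : A ∈ S) : (twoSecantPartners R S A).ncard = nSecants R S 2 A := by
  refine Set.ncard_congr (fun x hx => hx.2.2.choose) ?_ ?_ ?_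
  · rintro x ⟨-, -, hx⟩
    exact ⟨hx.choose_spec.1, hx.choose_spec.2.2⟩
  · rintro x y ⟨hxS, hxA, hx⟩ ⟨hyS, hyA, hy⟩ hxy
    obtain ⟨hAl, hxl, h2⟩ := hx.choose_spec
    have hyl := hxy ▸ hy.choose_spec.2.1
    have hpair := Set.eq_pair_of_ncard_eq_two h2 ⟨hAl, hA⟩ ⟨hxl, hxS⟩ hxA.symm
    have : y ∈ ({A, x} : Set P) := hpair ▸ ⟨hyl, hyS⟩
    rcases this with rfl | rfl
    exacts [(hyA rfl).elim, rfl]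
  · rintro l ⟨hAl, h2⟩
    obtain ⟨x, ⟨hxl, hxS⟩, hxA⟩ :=
      Set.exists_ne_of_one_lt_ncard (s := {x | R x l} ∩ S) (by omega) A
    have hx : ∃ m, R A m ∧ R x m ∧ ({y | R y m} ∩ S).ncard = 2 := ⟨l, hAl, hxl, h2⟩
    refine ⟨x, ⟨hxS, hxA, hx⟩, ?_⟩
    exact (h.existsUnique_line A x hxA.symm).unique
      ⟨hx.choose_spec.1, hx.choose_spec.2.1⟩ ⟨hAl, hxl⟩

end IsProjectivePlaneOrder

end Incidence

section CodeWord

variable {P L : Type*} [Finite P] {R : P → L → Prop} {n p : ℕ} {c : P → ZMod p} {l : L}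
  {A B : P}

namespace IsDualCodeWord

theorem add_add_finsum_mem_sdiff_eq_zero (hc : IsDualCodeWord p R c)
    (hA : A ∈ {x | R x l} ∩ support c) (hB : B ∈ {x | R x l} ∩ support c) (hAB : A ≠ B) :
    c A + c B + ∑ᶠ x ∈ ({x | R x l} ∩ support c) \ {A, B}, c x = 0 := by
  rw [← finsum_mem_pair hAB, finsum_mem_add_sdiff (Set.pair_subset hA hB) (Set.toFinite _),
    finsum_mem_inter_support]
  exact hc l

theorem two_le_ncard_inter_support (hc : IsDualCodeWord p R c) (hA : c A ≠ 0) (hAl : R A l) :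
    2 ≤ ({x | R x l} ∩ support c).ncard := by
  by_contra! h
  have hsingle : {x | R x l} ∩ support c = {A} :=
    Set.eq_singleton_iff_unique_mem.2
      ⟨⟨hAl, hA⟩, fun x hx => (Set.ncard_le_one_iff).1 (by omega) hx ⟨hAl, hA⟩⟩
  have hsum := hc l
  rw [← finsum_mem_inter_support, hsingle, finsum_mem_singleton] at hsum
  exact hA hsum

theorem eq_neg_of_ncard_inter_support_eq_two (hc : IsDualCodeWord p R c)
    (hA : A ∈ {x | R x l} ∩ support c) (hB : B ∈ {x | R x l} ∩ support c) (hAB : A ≠ B)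
    (h2 : ({x | R x l} ∩ support c).ncard = 2) : c B = -c A := by
  have hsum := hc.add_add_finsum_mem_sdiff_eq_zero hA hB hAB
  rw [Set.eq_pair_of_ncard_eq_two h2 hA hB hAB, Set.sdiff_self, finsum_mem_empty,
    add_zero] at hsum
  exact eq_neg_of_add_eq_zero_right hsum

theorem ncard_inter_support_ne_three (hc : IsDualCodeWord p R c)
    (hA : A ∈ {x | R x l} ∩ support c) (hB : B ∈ {x | R x l} ∩ support c) (hAB : A ≠ B)
    (hBA : c B = -c A) : ({x | R x l} ∩ support c).ncard ≠ 3 := by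
  intro h3
  have hrest : (({x | R x l} ∩ support c) \ {A, B}).ncard = 1 := by
    rw [Set.ncard_sdiff (Set.pair_subset hA hB), h3, Set.ncard_pair hAB]
  obtain ⟨C, hC⟩ := Set.ncard_eq_one.1 hrest
  have hCS : C ∈ support c := by
    have : C ∈ ({x | R x l} ∩ support c) \ {A, B} := hC ▸ Set.mem_singleton C
    exact this.1.2
  have hsum := hc.add_add_finsum_mem_sdiff_eq_zero hA hB hAB
  rw [hC, finsum_mem_singleton, hBA, add_neg_cancel, zero_add] at hsum
  exact hCS hsum

theorem twoSecantPartners_subset (hc : IsDualCodeWord p R c) (hA : c A ≠ 0) :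
    twoSecantPartners R (support c) A ⊆ {x | c x = -c A} := by
  rintro x ⟨hx, hxA, l, hAl, hxl, h2⟩
  exact hc.eq_neg_of_ncard_inter_support_eq_two ⟨hAl, hA⟩ ⟨hxl, hx⟩ hxA.symm h2

theorem nSecants_two_le_ncard_eq_neg (hPP : IsProjectivePlaneOrder n R)
    (hc : IsDualCodeWord p R c) (hA : c A ≠ 0) :
    nSecants R (support c) 2 A ≤ {x | c x = -c A}.ncard :=
  hPP.ncard_twoSecantPartners (mem_support.2 hA) ▸
    Set.ncard_le_ncard (hc.twoSecantPartners_subset hA)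

end IsDualCodeWord

end CodeWord

section Excess

variable {P L : Type*} [Finite P] [Finite L] {R : P → L → Prop} {n p : ℕ} {c : P → ZMod p}
  {A : P}

theorem nSecants_two_add_ncard_support (hPP : IsProjectivePlaneOrder n R)
    (hc : IsDualCodeWord p R c) (hA : c A ≠ 0) :
    nSecants R (support c) 2 A + (support c).ncard + n =
      3 * (n + 1) + secantExcess R (support c) A := by
  have hcount := sum_add_card_filter_eq_two
    fun l hl => hc.two_le_ncard_inter_support hA (mem_linesThrough.1 hl)
  rw [hPP.sum_ncard_inter_linesThrough hA, hPP.card_linesThrough] at hcount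
  rw [nSecants_eq_card_filter, secantExcess]
  omega

theorem nSecants_of_secantExcess_eq_one (hPP : IsProjectivePlaneOrder n R)
    (hc : IsDualCodeWord p R c) (hA : c A ≠ 0) (hE : secantExcess R (support c) A = 1) :
    nSecants R (support c) 2 A + nSecants R (support c) 3 A + 1 = n + 1 ∧
      nSecants R (support c) 4 A = 1 := by
  rw [secantExcess] at hE
  simp only [nSecants_eq_card_filter, ← hPP.card_linesThrough A]
  exact card_filter_of_sum_tsub_three_eq_one
    (fun l hl => hc.two_le_ncard_inter_support hA (mem_linesThrough.1 hl)) hE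

namespace IsDualCodeWord

theorem setOf_eq_neg_eq_twoSecantPartners (hPP : IsProjectivePlaneOrder n R)
    (hc : IsDualCodeWord p R c) (hA : c A ≠ 0) (hneg : -c A ≠ c A)
    (hE : secantExcess R (support c) A = 0) :
    {x | c x = -c A} = twoSecantPartners R (support c) A := by
  refine (Set.Subset.antisymm ?_ (hc.twoSecantPartners_subset hA))
  intro x (hx : c x = -c A)
  have hxA : x ≠ A := by
    rintro rfl
    exact hneg hx.symm
  have hxS : c x ≠ 0 := by
    rw [hx]
    exact neg_ne_zero.2 hA
  obtain ⟨l, ⟨hxl, hAl⟩, -⟩ := hPP.existsUnique_line x A hxA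
  refine ⟨hxS, hxA, l, hAl, hxl, ?_⟩
  have h2 := hc.two_le_ncard_inter_support hA hAl
  have h3 := secantExcess_eq_zero_iff.1 hE l hAl
  have hne3 := hc.ncard_inter_support_ne_three ⟨hAl, hA⟩ ⟨hxl, hxS⟩ hxA.symm hx
  omega

end IsDualCodeWord

end Excess

theorem two_secants_vs_opposite_colour_general {Pt Ln : Type} [Finite Pt] [Finite Ln]
    (p : ℕ) (hp : p.Prime) (hp3 : 3 ≤ p)
    (R : Pt → Ln → Prop) (hPP : IsProjectivePlaneOrder (p ^ 2) R)
    (c : Pt → ZMod p) (hc : IsDualCodeWord p R c)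
    (ε : ℕ) (hε2 : ε ≤ p - 2)
    (hw : (Function.support c).ncard = 2 * p ^ 2 - 2 * p + 2 + ε)
    (a : ZMod p) (ha : a ≠ 0) :
    (∀ A : Pt, c A = a →
        nSecants R (Function.support c) 2 A ≤ ({x | c x = -a} : Set Pt).ncard) ∧
    (({x | c x = -a} : Set Pt).ncard = 2 * p + 1 - ε →
        ∀ P : Pt, c P = a → nSecants R (Function.support c) 2 P = 2 * p + 1 - ε) ∧
    (∀ P : Pt, c P = a → nSecants R (Function.support c) 2 P = 2 * p + 1 - ε →
        ({x | c x = -a} : Set Pt).ncard = 2 * p + 1 - ε ∧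
        (∀ l : Ln, R P l → 2 ≤ ({x | R x l} ∩ Function.support c).ncard →
            ({x | R x l} ∩ Function.support c).ncard = 2 ∨
              ({x | R x l} ∩ Function.support c).ncard = 3) ∧
        ({x | c x = -a} : Set Pt) =
          {x | x ∈ Function.support c ∧ x ≠ P ∧
            ∃ l : Ln, R P l ∧ R x l ∧ ({y | R y l} ∩ Function.support c).ncard = 2}) ∧
    (({x | c x = -a} : Set Pt).ncard = 2 * p + 2 - ε →
        ∀ P : Pt, c P = a →
          nSecants R (Function.support c) 2 P = 2 * p + 2 - ε ∧
          nSecants R (Function.support c) 3 P = p ^ 2 - 2 * p - 2 + ε ∧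
          nSecants R (Function.support c) 4 P = 1) := by
  have hq : 3 * p ≤ p ^ 2 := by nlinarith
  have hneg : -a ≠ a := ZMod.neg_ne_self_of_odd (hp.odd_of_ne_two (by omega)) ha
  have hcount (P : Pt) (hP : c P ≠ 0) :
      nSecants R (support c) 2 P + ε = 2 * p + 1 + secantExcess R (support c) P := by
    have := nSecants_two_add_ncard_support hPP hc hP
    omega
  have hpartners {P : Pt} (hP : c P ≠ 0) :
      (twoSecantPartners R (support c) P).ncard = nSecants R (support c) 2 P :=
    hPP.ncard_twoSecantPartners (mem_support.2 hP)
  refine ⟨fun A hA => hA ▸ hc.nSecants_two_le_ncard_eq_neg hPP (hA ▸ ha), ?_, ?_, ?_⟩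
  · rintro hK P rfl
    have := hc.nSecants_two_le_ncard_eq_neg hPP ha
    have := hcount P ha
    omega
  · rintro P rfl hP2
    have hE : secantExcess R (support c) P = 0 := by
      have := hcount P ha
      omega
    have hK := hc.setOf_eq_neg_eq_twoSecantPartners hPP ha hneg hE
    refine ⟨by rw [hK, hpartners ha, hP2], fun l hl h2 => ?_, hK⟩
    have := secantExcess_eq_zero_iff.1 hE l hl
    omega
  · rintro hK P rfl
    have h1 := hc.nSecants_two_le_ncard_eq_neg hPP ha
    have h2 := hcount P ha
    have hE : secantExcess R (support c) P = 1 := by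
      refine le_antisymm (by omega) (Nat.one_le_iff_ne_zero.2 fun hE => ?_)
      rw [hc.setOf_eq_neg_eq_twoSecantPartners hPP ha hneg hE, hpartners ha] at hK
      omega
    have := nSecants_of_secantExcess_eq_one hPP hc ha hE
    omega

/-- Relations between the number of `2`-secants through points of `K_λ` and the size of
`K_{p-λ}`, for a code word of weight `2p² - 2p + 2 + ε`. -/
theorem two_secants_vs_opposite_colour {Pt Ln : Type} [Finite Pt] [Finite Ln]
    (p : ℕ) (hp : p.Prime) (hp3 : 3 ≤ p)
    (R : Pt → Ln → Prop) (hPP : IsProjectivePlaneOrder (p ^ 2) R)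
    (c : Pt → ZMod p) (hc : IsDualCodeWord p R c)
    (ε : ℕ) (hε1 : 1 ≤ ε) (hε2 : ε ≤ p - 2)
    (hw : (Function.support c).ncard = 2 * p ^ 2 - 2 * p + 2 + ε)
    (a : ZMod p) (ha : a ≠ 0) :
    (∀ A : Pt, c A = a →
        nSecants R (Function.support c) 2 A ≤ ({x | c x = -a} : Set Pt).ncard) ∧
    (({x | c x = -a} : Set Pt).ncard = 2 * p + 1 - ε →
        ∀ P : Pt, c P = a → nSecants R (Function.support c) 2 P = 2 * p + 1 - ε) ∧
    (∀ P : Pt, c P = a → nSecants R (Function.support c) 2 P = 2 * p + 1 - ε →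
        ({x | c x = -a} : Set Pt).ncard = 2 * p + 1 - ε ∧
        (∀ l : Ln, R P l → 2 ≤ ({x | R x l} ∩ Function.support c).ncard →
            ({x | R x l} ∩ Function.support c).ncard = 2 ∨
              ({x | R x l} ∩ Function.support c).ncard = 3) ∧
        ({x | c x = -a} : Set Pt) =
          {x | x ∈ Function.support c ∧ x ≠ P ∧
            ∃ l : Ln, R P l ∧ R x l ∧ ({y | R y l} ∩ Function.support c).ncard = 2}) ∧
    (({x | c x = -a} : Set Pt).ncard = 2 * p + 2 - ε →
        ∀ P : Pt, c P = a →
          nSecants R (Function.support c) 2 P = 2 * p + 2 - ε ∧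
          nSecants R (Function.support c) 3 P = p ^ 2 - 2 * p - 2 + ε ∧
          nSecants R (Function.support c) 4 P = 1) :=
  two_secants_vs_opposite_colour_general p hp hp3 R hPP c hc ε hε2 hw a ha
end
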